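/- arXiv:2201.02658 — 2 statements merged into one kernel-verified Lean document; each statement's English description precedes it below -/
import Mathlib

section
/- (Approximate low rank from bounded successive row differences.) Let H ∈ ℝ^{T×N} be a real matrix, ε > 0, and δ_1,…,δ_{T−1} ≥ 0 be such that |H_{t,i} − H_{t+1,i}| ≤ δ_t for all t = 1,…,T−1 and all i = 1,…,N. Then there exists a matrix Z ∈ ℝ^{T×N} with rank(Z) ≤ ⌊(Σ_{t=1}^{T−1} δ_t)/ε⌋ + 1 such that |H_{t,i} − Z_{t,i}| ≤ ε for all t and i. -/
/-!
Let `S t = δ 0 + ⋯ + δ (t - 1)`. By the triangle inequality, rows `s ≤ t` of `H` differ entrywise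
by at most `S t - S s`, so rows whose values of `S` fall into the same interval `[kε, (k + 1)ε)`
are `ε`-close. Replacing each row by a fixed representative of its interval gives a matrix whose
rows take at most `⌊S (T - 1) / ε⌋ + 1` distinct values.
-/

open Finset

theorem Fin.dist_le_sum_Ico_of_dist_succ_le {E : Type*} [PseudoMetricSpace E] {T : ℕ}
    {x : Fin T → E} {δ : ℕ → ℝ}
    (hx : ∀ (t : ℕ) (ht : t + 1 < T), dist (x ⟨t, Nat.lt_of_succ_lt ht⟩) (x ⟨t + 1, ht⟩) ≤ δ t)
    {a b : Fin T} (hab : a ≤ b) : dist (x a) (x b) ≤ ∑ t ∈ Ico (a : ℕ) b, δ t := by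
  have hT : 0 < T := a.pos
  let f : ℕ → E := fun k => x ⟨min k (T - 1), by omega⟩
  have hf : ∀ t : Fin T, f t = x t := fun t => congrArg x (Fin.ext (by simp only; omega))
  rw [← hf a, ← hf b]
  refine dist_le_Ico_sum_of_dist_le hab fun {k} _ hk => ?_
  have hk' : k + 1 < T := by omega
  have hmin : ∀ j ≤ k + 1, min j (T - 1) = j := fun j hj => by omega
  simpa only [f, hmin k k.le_succ, hmin (k + 1) le_rfl] using hx k hk'

theorem sub_lt_of_natFloor_div_eq {K : Type*} [Field K] [LinearOrder K] [IsStrictOrderedRing K]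
    [FloorSemiring K] {x y ε : K} (hε : 0 < ε) (hx : 0 ≤ x) (h : ⌊x / ε⌋₊ = ⌊y / ε⌋₊) :
    y - x < ε := by
  have hy : y / ε < ⌊x / ε⌋₊ + 1 := h ▸ Nat.lt_floor_add_one _
  have hx' : (⌊x / ε⌋₊ : K) ≤ x / ε := Nat.floor_le (div_nonneg hx hε.le)
  have : (y - x) / ε < 1 := by rw [sub_div]; linarith
  exact (div_lt_one hε).1 this

theorem Matrix.exists_rank_le_card_of_abs_sub_le_on_fibers {R m n κ : Type*}
    [Field R] [LinearOrder R] [Fintype m] [Fintype n] [Fintype κ]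
    (H : Matrix m n R) (g : m → κ) {ε : R}
    (h : ∀ s t, g s = g t → ∀ i, |H s i - H t i| ≤ ε) :
    ∃ Z : Matrix m n R, Z.rank ≤ Fintype.card κ ∧ ∀ t i, |H t i - Z t i| ≤ ε := by
  classical
  let W : Matrix κ n R := fun k => if hk : ∃ t, g t = k then H hk.choose else 0
  refine ⟨W.submatrix g id, (W.rank_submatrix_le g id).trans W.rank_le_card_height, fun t i => ?_⟩
  have ht : ∃ s, g s = g t := ⟨t, rfl⟩
  have hZ : W.submatrix g id t i = H ht.choose i := by
    change (if hk : ∃ s, g s = g t then H hk.choose else 0) i = _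
    rw [dif_pos ht]
  exact hZ ▸ h t _ ht.choose_spec.symm i

/-- **Approximate low rank from bounded successive row differences.**
If the successive rows of `H ∈ ℝ^{T×N}` differ entrywise by at most
`δ t`, then `H` can be approximated entrywise within `ε` by a matrix of
rank at most `⌊(∑ δ t) / ε⌋ + 1`. -/
theorem eps_rank_of_bounded_row_differences
    (T N : ℕ) (H : Matrix (Fin T) (Fin N) ℝ)
    (ε : ℝ) (hε : 0 < ε)
    (δ : ℕ → ℝ) (hδ : ∀ t, 0 ≤ δ t)
    (hrow : ∀ (t : ℕ) (ht : t + 1 < T) (i : Fin N),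
        |H ⟨t, Nat.lt_of_succ_lt ht⟩ i - H ⟨t + 1, ht⟩ i| ≤ δ t) :
    ∃ Z : Matrix (Fin T) (Fin N) ℝ,
      Z.rank ≤ Nat.floor ((∑ t ∈ Finset.range (T - 1), δ t) / ε) + 1 ∧
      ∀ (t : Fin T) (i : Fin N), |H t i - Z t i| ≤ ε := by
  set S : ℕ → ℝ := fun t => ∑ s ∈ range t, δ s
  have hS_nonneg : ∀ t, 0 ≤ S t := fun t => sum_nonneg fun s _ => hδ s
  have hS_mono : Monotone S := fun a b hab =>
    sum_le_sum_of_subset_of_nonneg (range_subset_range.2 hab) fun s _ _ => hδ s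
  let bucket : Fin T → Fin (⌊S (T - 1) / ε⌋₊ + 1) := fun t =>
    ⟨⌊S t / ε⌋₊, Nat.lt_succ_of_le <| Nat.floor_le_floor <|
      div_le_div_of_nonneg_right (hS_mono (by omega)) hε.le⟩
  have close : ∀ s t : Fin T, s ≤ t → bucket s = bucket t → ∀ i, |H s i - H t i| ≤ ε := by
    intro s t hst hbucket i
    calc |H s i - H t i| = dist (H s i) (H t i) := (Real.dist_eq _ _).symm
      _ ≤ ∑ k ∈ Ico (s : ℕ) t, δ k :=
        Fin.dist_le_sum_Ico_of_dist_succ_le (x := fun t => H t i)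
          (fun k hk => (Real.dist_eq _ _).trans_le (hrow k hk i)) hst
      _ = S t - S s := sum_Ico_eq_sub _ hst
      _ ≤ ε := (sub_lt_of_natFloor_div_eq hε (hS_nonneg s) (congrArg Fin.val hbucket)).le
  obtain ⟨Z, hrank, hZ⟩ :=
    H.exists_rank_le_card_of_abs_sub_le_on_fibers bucket fun s t hbucket i => by
      rcases le_total s t with hle | hle
      · exact close s t hle hbucket i
      · exact abs_sub_comm (H s i) (H t i) ▸ close t s hle hbucket.symm i
  exact ⟨Z, hrank.trans_eq (Fintype.card_fin _), hZ⟩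
end

section
/- (Quantitative reward gap for the harder-working client.) Let E be a real inner product space, μ > 0, and g : E → ℝ a μ-strongly convex function with global minimizer θ* ∈ E. Then for every ρ ∈ [0, 1]: 2·( g( (ρ/(1+ρ))·θ* ) − g( (1/(1+ρ))·θ* ) ) ≥ μ·((1−ρ)/(1+ρ))²·‖θ*‖². -/
/-!
Put `a = ρ/(1+ρ)`, `b = 1/(1+ρ)`, so that `b • θ* = ρ • (a • θ*) + (1 - ρ) • θ*` and
`‖a • θ* - θ*‖ = b ‖θ*‖`. Strong convexity along this combination bounds `g (b • θ*)` from above,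
and quadratic growth around the minimizer bounds `g (a • θ*)` from below; together they give
`2 (g (a • θ*) - g (b • θ*)) ≥ μ (1 - ρ)/(1 + ρ) ‖θ*‖²`, which dominates the claimed bound
because `0 ≤ (1 - ρ)/(1 + ρ) ≤ 1`.
-/

open Filter Set Topology

section StrongConvexity

variable {E : Type*} [NormedAddCommGroup E] [NormedSpace ℝ E] {s : Set E} {m : ℝ} {f : E → ℝ}
  {x₀ x : E}

lemma StrongConvexOn.add_sq_norm_sub_le_of_isMinOn (hf : StrongConvexOn s m f)
    (hmin : IsMinOn f s x₀) (hx₀ : x₀ ∈ s) (hx : x ∈ s) :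
    f x₀ + m / 2 * ‖x - x₀‖ ^ 2 ≤ f x := by
  -- Compare `f x₀` with `f` at `t • x + (1 - t) • x₀`, divide by `t` and let `t → 0⁺`.
  have hsegment : ∀ t ∈ Ioo (0 : ℝ) 1, m / 2 * ‖x - x₀‖ ^ 2 * (1 - t) ≤ f x - f x₀ := by
    rintro t ⟨ht₀, ht₁⟩
    have hconv := hf.2 hx hx₀ ht₀.le (sub_nonneg.2 ht₁.le) (add_sub_cancel t 1)
    have hle := isMinOn_iff.1 hmin _
      (hf.1 hx hx₀ ht₀.le (sub_nonneg.2 ht₁.le) (add_sub_cancel t 1))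
    simp only [smul_eq_mul] at hconv
    refine le_of_mul_le_mul_left ?_ ht₀
    nlinarith
  have hlim : Tendsto (fun t : ℝ ↦ m / 2 * ‖x - x₀‖ ^ 2 * (1 - t)) (𝓝[>] 0)
      (𝓝 (m / 2 * ‖x - x₀‖ ^ 2 * (1 - 0))) :=
    (continuous_const.mul (continuous_const.sub continuous_id)).continuousWithinAt
  have := le_of_tendsto hlim (eventually_of_mem (Ioo_mem_nhdsGT one_pos) hsegment)
  linarith

lemma StrongConvexOn.one_sub_sq_mul_le_sub_of_isMinOn (hf : StrongConvexOn s m f)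
    (hmin : IsMinOn f s x₀) (hx₀ : x₀ ∈ s) {y : E} (hy : y ∈ s) {ρ : ℝ} (hρ₀ : 0 ≤ ρ)
    (hρ₁ : ρ ≤ 1) :
    (1 - ρ ^ 2) * (m / 2 * ‖y - x₀‖ ^ 2) ≤ f y - f (ρ • y + (1 - ρ) • x₀) := by
  have hconv := hf.2 hy hx₀ hρ₀ (sub_nonneg.2 hρ₁) (add_sub_cancel ρ 1)
  have hgrowth := hf.add_sq_norm_sub_le_of_isMinOn hmin hx₀ hy
  simp only [smul_eq_mul] at hconv
  nlinarith [mul_le_mul_of_nonneg_left hgrowth (sub_nonneg.2 hρ₁)]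

end StrongConvexity

/-- **Quantitative reward gap for the harder-working client.**
`g` is `μ`-strongly convex (i.e. `g - (μ/2)‖·‖²` is convex) with global
minimizer `θ*`.  For every `ρ ∈ [0,1]`,
`2 (g((ρ/(1+ρ)) θ*) - g((1/(1+ρ)) θ*)) ≥ μ ((1-ρ)/(1+ρ))² ‖θ*‖²`. -/
theorem reward_gap_of_strongly_convex
    {E : Type*} [NormedAddCommGroup E] [InnerProductSpace ℝ E]
    (μ : ℝ) (hμ : 0 < μ) (g : E → ℝ)
    (hsc : ConvexOn ℝ Set.univ (fun x => g x - μ / 2 * ‖x‖ ^ 2))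
    (θstar : E) (hmin : ∀ θ : E, g θstar ≤ g θ)
    (ρ : ℝ) (hρ₀ : 0 ≤ ρ) (hρ₁ : ρ ≤ 1) :
    2 * (g ((ρ / (1 + ρ)) • θstar) - g ((1 / (1 + ρ)) • θstar)) ≥
      μ * ((1 - ρ) / (1 + ρ)) ^ 2 * ‖θstar‖ ^ 2 := by
  have hρ : 0 < 1 + ρ := by linarith
  have hgap := (strongConvexOn_iff_convex.2 hsc).one_sub_sq_mul_le_sub_of_isMinOn
    (isMinOn_univ_iff.2 hmin) (mem_univ θstar) (mem_univ ((ρ / (1 + ρ)) • θstar)) hρ₀ hρ₁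
  have hcomb : ρ • (ρ / (1 + ρ)) • θstar + (1 - ρ) • θstar = (1 / (1 + ρ)) • θstar := by
    rw [smul_smul, ← add_smul]
    congr 1
    field_simp
    ring
  have hdist : ‖(ρ / (1 + ρ)) • θstar - θstar‖ = ‖θstar‖ / (1 + ρ) := by
    have hsub : (ρ / (1 + ρ)) • θstar - θstar = -(1 / (1 + ρ)) • θstar := by
      match_scalars
      field_simp
      ring
    rw [hsub, norm_smul, norm_neg, Real.norm_of_nonneg (by positivity)]
    ring
  rw [hcomb, hdist] at hgap
  have hq₀ : 0 ≤ (1 - ρ) / (1 + ρ) := div_nonneg (by linarith) hρ.le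
  have hq₁ : (1 - ρ) / (1 + ρ) ≤ 1 := (div_le_one hρ).2 (by linarith)
  calc μ * ((1 - ρ) / (1 + ρ)) ^ 2 * ‖θstar‖ ^ 2
      ≤ μ * ((1 - ρ) / (1 + ρ)) * ‖θstar‖ ^ 2 := by
        gcongr
        exact pow_le_of_le_one hq₀ hq₁ two_ne_zero
    _ = 2 * ((1 - ρ ^ 2) * (μ / 2 * (‖θstar‖ / (1 + ρ)) ^ 2)) := by
        field_simp
        ring
    _ ≤ _ := by linarith
end
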